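/- arXiv:2303.14533 — 4 statements merged into one kernel-verified Lean document; each statement's English description precedes it below -/
import Mathlib

section
/- Let A (N×Q), B (Q×Q), C (Q×J), D (N×Q) and E (Q×1) be constant real matrices, and suppose the matrix B + C·Y(x)ᵀ·D is invertible. Then for every i ∈ {1,…,N}, the function t ↦ (A · (B + C·Y(x with i-th coordinate replaced by t)ᵀ·D)⁻¹ · E)_i is differentiable at t = x_i, and its derivative equals the i-th entry of −Diag(A (B + C Y(x)ᵀ D)⁻¹ C (∇_X Y(x))ᵀ) ∘ (D (B + C Y(x)ᵀ D)⁻¹ E), where Diag(M) denotes the column vector of diagonal entries of a square matrix M and ∘ denotes the entrywise (Hadamard) product. -/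
/-!
Moving `x i` to `t` changes only row `i` of `Y`, namely to `G t = (g i k t)ₖ`, so
`M₀ = B + C Yᵀ D` undergoes the rank-one update `M₀ + (C (G t - G (x i))) (D i)ᵀ`. Differentiating the
inverse gives `-M₀⁻¹ (C G') (D i)ᵀ M₀⁻¹`, and the `i`-th entry of `A (·) E` of this rank-one
matrix splits into the product of `(A M₀⁻¹ C G') i` and `(D M₀⁻¹ E) i`.
-/

open Matrix

-- Any norm fixes the same (product) topology; this one makes square matrices a normed algebra.
attribute [local instance] Matrix.linftyOpNormedAddCommGroup Matrix.linftyOpNormedSpace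
  Matrix.linftyOpNormedRing Matrix.linftyOpNormedAlgebra

theorem HasDerivAt.linearMap_comp {𝕜 E F : Type*} [NontriviallyNormedField 𝕜] [CompleteSpace 𝕜]
    [NormedAddCommGroup E] [NormedSpace 𝕜 E] [FiniteDimensional 𝕜 E]
    [NormedAddCommGroup F] [NormedSpace 𝕜 F] (L : E →ₗ[𝕜] F)
    {f : 𝕜 → E} {f' : E} {t : 𝕜} (hf : HasDerivAt f f' t) :
    HasDerivAt (fun s => L (f s)) (L f') t :=
  (LinearMap.toContinuousLinearMap L).hasFDerivAt.comp_hasDerivAt t hf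

theorem HasDerivAt.matrix_inv {𝕜 n : Type*} [RCLike 𝕜] [Fintype n] [DecidableEq n]
    {M : 𝕜 → Matrix n n 𝕜} {M' : Matrix n n 𝕜} {t : 𝕜}
    (hM : HasDerivAt M M' t) (ht : IsUnit (M t).det) :
    HasDerivAt (fun s => (M s)⁻¹) (-((M t)⁻¹ * M' * (M t)⁻¹)) t := by
  obtain ⟨u, hu⟩ := (isUnit_iff_isUnit_det _).mpr ht
  have hinv : HasFDerivAt Ring.inverse _ (M t) := hu ▸ hasFDerivAt_ringInverse (𝕜 := 𝕜) u
  have h := hinv.comp_hasDerivAt t hM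
  simp only [Function.comp_def, ← Matrix.nonsing_inv_eq_ringInverse] at h
  simp only [Matrix.coe_units_inv, hu] at h
  exact h

theorem HasDerivAt.matrix_mul_mulVec_apply {𝕜 l m n : Type*} [NontriviallyNormedField 𝕜]
    [CompleteSpace 𝕜] [Fintype m] [Fintype n] (A : Matrix l m 𝕜) (E : n → 𝕜) (i : l)
    {M : 𝕜 → Matrix m n 𝕜} {M' : Matrix m n 𝕜} {t : 𝕜} (hM : HasDerivAt M M' t) :
    HasDerivAt (fun s => ((A * M s) *ᵥ E) i) (((A * M') *ᵥ E) i) t :=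
  hM.linearMap_comp (show Matrix m n 𝕜 →ₗ[𝕜] 𝕜 from
    { toFun X := ((A * X) *ᵥ E) i
      map_add' X Y := by simp [Matrix.mul_add, add_mulVec]
      map_smul' c X := by simp [Matrix.mul_smul, smul_mulVec] })

theorem Matrix.of_update_eq_updateRow {m n α R : Type*} [DecidableEq m] (f : m → n → α → R)
    (x : m → α) (i : m) (a : α) :
    (of fun i' k => f i' k (Function.update x i a i')) =
      (of fun i' k => f i' k (x i')).updateRow i (fun k => f i k a) := by
  ext i' k
  rcases eq_or_ne i' i with rfl | h <;> simp [*]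

theorem Matrix.updateRow_eq_add_vecMulVec {m n R : Type*} [DecidableEq m] [Ring R]
    (Y : Matrix m n R) (i : m) (v : n → R) :
    Y.updateRow i v = Y + vecMulVec (Pi.single i 1) (v - Y i) := by
  ext a b
  rcases eq_or_ne a i with rfl | h <;> simp [vecMulVec_apply, *]

theorem Matrix.mul_transpose_vecMulVec_single_mul {l m n o R : Type*} [Fintype m] [Fintype n]
    [DecidableEq n] [CommSemiring R] (P : Matrix l m R) (i : n) (u : m → R) (Q : Matrix n o R) :
    P * (vecMulVec (Pi.single i 1) u)ᵀ * Q = vecMulVec (P *ᵥ u) (Q i) := by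
  rw [transpose_vecMulVec, mul_vecMulVec, vecMulVec_mul, single_one_vecMul]
  rfl

theorem Matrix.mul_mul_vecMulVec_mul_mulVec_apply {l m n R : Type*} [Fintype m] [Fintype n]
    [CommSemiring R] (A : Matrix l m R) (P : Matrix m m R) (C : Matrix m n R)
    (D : Matrix l m R) (E : m → R) (u : n → R) (i : l) :
    ((A * (P * vecMulVec (C *ᵥ u) (D i) * P)) *ᵥ E) i =
      ((A * P * C) *ᵥ u) i * ((D * P) *ᵥ E) i := by
  have hA : ((A * P * C) *ᵥ u) i = A i ⬝ᵥ (P *ᵥ C *ᵥ u) := by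
    rw [Matrix.mul_assoc, ← mulVec_mulVec, ← mulVec_mulVec]; rfl
  have hD : ((D * P) *ᵥ E) i = D i ᵥ* P ⬝ᵥ E := by
    rw [← mulVec_mulVec, ← dotProduct_mulVec]; rfl
  rw [hA, hD, ← mulVec_mulVec, mul_vecMulVec, vecMulVec_mul, vecMulVec_mulVec, op_smul_eq_smul,
    mulVec_smul, Pi.smul_apply, smul_eq_mul, mul_comm]
  rfl

/-- For `Y(x)` the `N × J` matrix with entries `g_{i,j}(x_i)`, constant
matrices `A (N×Q)`, `B (Q×Q)`, `C (Q×J)`, `D (N×Q)` and a constant column vector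
`E ∈ ℝ^Q`, if `B + C Y(x)ᵀ D` is invertible then
`t ↦ (A · (B + C · Y(x with i-th coord replaced by t)ᵀ · D)⁻¹ · E)_i` is differentiable
at `t = x_i`, with derivative the `i`-th entry of
`−Diag(A (B + C Yᵀ D)⁻¹ C (∇_X Y)ᵀ) ∘ (D (B + C Yᵀ D)⁻¹ E)`. -/
theorem stmt_3 (N J Q : ℕ) (g : Fin N → Fin J → ℝ → ℝ)
    (hg : ∀ i j, Differentiable ℝ (g i j))
    (A : Matrix (Fin N) (Fin Q) ℝ) (B : Matrix (Fin Q) (Fin Q) ℝ)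
    (C : Matrix (Fin Q) (Fin J) ℝ) (D : Matrix (Fin N) (Fin Q) ℝ)
    (E : Fin Q → ℝ) (x : Fin N → ℝ)
    (hinv : IsUnit (B + C * (Matrix.of fun i' k => g i' k (x i'))ᵀ * D).det)
    (i : Fin N) :
    HasDerivAt
      (fun t : ℝ =>
        ((A * (B + C * (Matrix.of fun i' k => g i' k (Function.update x i t i'))ᵀ * D)⁻¹).mulVec
          E) i)
      (-((A * (B + C * (Matrix.of fun i' k => g i' k (x i'))ᵀ * D)⁻¹ * C *
            (Matrix.of fun i' k => deriv (g i' k) (x i'))ᵀ) i i *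
          ((D * (B + C * (Matrix.of fun i' k => g i' k (x i'))ᵀ * D)⁻¹).mulVec E) i))
      (x i) := by
  set M₀ := B + C * (Matrix.of fun i' k => g i' k (x i'))ᵀ * D
  set G : ℝ → Fin J → ℝ := fun t k => g i k t
  have hG : HasDerivAt G (fun k => deriv (g i k) (x i)) (x i) :=
    hasDerivAt_pi.2 fun k => (hg i k (x i)).hasDerivAt
  have hM (t : ℝ) : B + C * (Matrix.of fun i' k => g i' k (Function.update x i t i'))ᵀ * D =
      M₀ + vecMulVec (C *ᵥ (G t - G (x i))) (D i) := by
    rw [of_update_eq_updateRow, updateRow_eq_add_vecMulVec, transpose_add, Matrix.mul_add,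
      Matrix.add_mul, mul_transpose_vecMulVec_single_mul, add_assoc]
    rfl
  have hM' : HasDerivAt (fun t => M₀ + vecMulVec (C *ᵥ (G t - G (x i))) (D i))
      (vecMulVec (C *ᵥ fun k => deriv (g i k) (x i)) (D i)) (x i) :=
    ((hG.sub_const (G (x i))).linearMap_comp
      ((vecMulVecBilin ℝ ℝ).flip (D i) ∘ₗ C.mulVecLin)).const_add M₀
  have hInv := hM'.matrix_inv (by simpa using hinv)
  simp only [sub_self, mulVec_zero, zero_vecMulVec, add_zero] at hInv
  have hEntry := hInv.matrix_mul_mulVec_apply A E i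
  simp only [Matrix.mul_neg, neg_mulVec, Pi.neg_apply, mul_mul_vecMulVec_mul_mulVec_apply] at hEntry
  simp only [hM]
  exact hEntry
end

section
/- Let A (N×Q), B (Q×Q), C (Q×N), D (J×Q) and E (Q×1) be constant real matrices, and suppose the matrix B + C·Y(x)·D is invertible. Then for every i ∈ {1,…,N}, the function t ↦ (A · (B + C·Y(x with i-th coordinate replaced by t)·D)⁻¹ · E)_i is differentiable at t = x_i, and its derivative equals the i-th entry of −Diag(A (B + C Y(x) D)⁻¹ C) ∘ ((∇_X Y(x)) D (B + C Y(x) D)⁻¹ E), where Diag(M) denotes the column vector of diagonal entries of a square matrix M and ∘ denotes the entrywise (Hadamard) product. -/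
/-!
Write `M(t) = B + C Y(x[i ↦ t]) D`. Only row `i` of `Y` moves with `t`, so
`M'(xᵢ) = C (diag eᵢ ∇_X Y) D`, and differentiating the inverse gives
`(M⁻¹)' = -M⁻¹ M' M⁻¹`. Multiplying by `A` on the left and `E` on the right, the factor
`diag eᵢ` picks out the `(i, i)` entry of `A M⁻¹ C` and the `i`-th entry of `∇_X Y D M⁻¹ E`.
-/

open Matrix

-- Any norm would do; this one makes square matrices a normed algebra, so that the derivative
-- of `Ring.inverse` is available.
attribute [local instance] Matrix.linftyOpNormedAddCommGroup Matrix.linftyOpNormedSpace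
  Matrix.linftyOpNormedRing Matrix.linftyOpNormedAlgebra

theorem LinearMap.hasDerivAt_comp {E F : Type*} [NormedAddCommGroup E] [NormedSpace ℝ E]
    [FiniteDimensional ℝ E] [NormedAddCommGroup F] [NormedSpace ℝ F] (L : E →ₗ[ℝ] F)
    {f : ℝ → E} {f' : E} {t : ℝ} (hf : HasDerivAt f f' t) :
    HasDerivAt (fun s => L (f s)) (L f') t :=
  L.toContinuousLinearMap.hasFDerivAt.comp_hasDerivAt t hf

namespace Matrix

theorem mul_diagonal_single_mul_mulVec_apply {l m n : Type*} [Fintype m] [Fintype n]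
    [DecidableEq m] (P : Matrix l m ℝ) (Q : Matrix m n ℝ) (v : n → ℝ) (i : l) (j : m) :
    ((P * diagonal (Pi.single j (1 : ℝ)) * Q) *ᵥ v) i = P i j * (Q *ᵥ v) j := by
  have hdiag : ∀ w : m → ℝ, diagonal (Pi.single j (1 : ℝ)) *ᵥ w = Pi.single j (w j) := by
    intro w
    ext p
    rcases eq_or_ne p j with rfl | h <;> simp [mulVec_diagonal, *]
  rw [Matrix.mul_assoc, ← mulVec_mulVec, ← mulVec_mulVec, hdiag, mulVec_single]
  simp

variable {l m n o : Type*} [Fintype m] [Fintype n] {F : ℝ → Matrix m n ℝ} {F' : Matrix m n ℝ}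
  {t : ℝ}

theorem hasDerivAt_of_hasDerivAt_entries
    (h : ∀ p q, HasDerivAt (fun s => F s p q) (F' p q) t) : HasDerivAt F F' t :=
  (ofLinearEquiv ℝ).toLinearMap.hasDerivAt_comp <|
    hasDerivAt_pi.2 fun p => hasDerivAt_pi.2 (h p)

theorem _root_.HasDerivAt.matrix_mul_left [Fintype l] (hF : HasDerivAt F F' t)
    (C : Matrix l m ℝ) : HasDerivAt (fun s => C * F s) (C * F') t :=
  (mulLeftLinearMap n ℝ C).hasDerivAt_comp hF

theorem _root_.HasDerivAt.matrix_mul_right [Fintype o] (hF : HasDerivAt F F' t)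
    (D : Matrix n o ℝ) : HasDerivAt (fun s => F s * D) (F' * D) t :=
  (mulRightLinearMap m ℝ D).hasDerivAt_comp hF

theorem _root_.HasDerivAt.mulVec_apply (hF : HasDerivAt F F' t) (v : n → ℝ) (i : m) :
    HasDerivAt (fun s => (F s *ᵥ v) i) ((F' *ᵥ v) i) t :=
  (LinearMap.proj i ∘ₗ (mulVecBilin ℝ ℝ).flip v).hasDerivAt_comp hF

theorem hasDerivAt_inv [DecidableEq n] {M : ℝ → Matrix n n ℝ} {M' : Matrix n n ℝ}
    (hM : HasDerivAt M M' t) (hdet : IsUnit (M t).det) :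
    HasDerivAt (fun s => (M s)⁻¹) (-((M t)⁻¹ * M' * (M t)⁻¹)) t := by
  have hu := (isUnit_iff_isUnit_det _).2 hdet
  have hinverse := (hasFDerivAt_ringInverse (𝕜 := ℝ) hu.unit).comp_hasDerivAt t hM
  simp only [nonsing_inv_eq_ringInverse]
  refine hinverse.congr_deriv ?_
  rw [show Ring.inverse (M t) = ↑hu.unit⁻¹ from Ring.inverse_unit hu.unit]
  rfl

theorem hasDerivAt_matrixOf_update [DecidableEq m] {g : m → n → ℝ → ℝ} {x : m → ℝ}
    (hg : ∀ p k, DifferentiableAt ℝ (g p k) (x p)) (i : m) :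
    HasDerivAt (fun t => of fun p k => g p k (Function.update x i t p))
      (diagonal (Pi.single i (1 : ℝ)) * of fun p k => deriv (g p k) (x p)) (x i) := by
  refine hasDerivAt_of_hasDerivAt_entries fun p k => ?_
  have hupdate := hasDerivAt_pi.1 (hasDerivAt_update x i (x i)) p
  refine ((hg p k).hasDerivAt.comp_of_eq (x i) hupdate (by simp)).congr_deriv ?_
  simp [diagonal_mul, mul_comm]

end Matrix

/-- For `Y(x)` the `N × J` matrix with entries `g_{i,j}(x_i)`, constant
matrices `A (N×Q)`, `B (Q×Q)`, `C (Q×N)`, `D (J×Q)` and a constant column vector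
`E ∈ ℝ^Q`, if `B + C Y(x) D` is invertible then
`t ↦ (A · (B + C · Y(x with i-th coord replaced by t) · D)⁻¹ · E)_i` is differentiable
at `t = x_i`, with derivative the `i`-th entry of
`−Diag(A (B + C Y D)⁻¹ C) ∘ ((∇_X Y) D (B + C Y D)⁻¹ E)`. -/
theorem stmt_4 (N J Q : ℕ) (g : Fin N → Fin J → ℝ → ℝ)
    (hg : ∀ i j, Differentiable ℝ (g i j))
    (A : Matrix (Fin N) (Fin Q) ℝ) (B : Matrix (Fin Q) (Fin Q) ℝ)
    (C : Matrix (Fin Q) (Fin N) ℝ) (D : Matrix (Fin J) (Fin Q) ℝ)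
    (E : Fin Q → ℝ) (x : Fin N → ℝ)
    (hinv : IsUnit (B + C * (Matrix.of fun i' k => g i' k (x i')) * D).det)
    (i : Fin N) :
    HasDerivAt
      (fun t : ℝ =>
        ((A * (B + C * (Matrix.of fun i' k => g i' k (Function.update x i t i')) * D)⁻¹).mulVec
          E) i)
      (-((A * (B + C * (Matrix.of fun i' k => g i' k (x i')) * D)⁻¹ * C) i i *
          (((Matrix.of fun i' k => deriv (g i' k) (x i')) * D *
              (B + C * (Matrix.of fun i' k => g i' k (x i')) * D)⁻¹).mulVec E) i))
      (x i) := by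
  have hY := hasDerivAt_matrixOf_update (x := x) (fun p k => (hg p k).differentiableAt) i
  have hM := ((hY.matrix_mul_left C).matrix_mul_right D).const_add B
  have hMinv := hasDerivAt_inv hM (by simpa using hinv)
  convert (hMinv.matrix_mul_left A).mulVec_apply E i using 1
  rw [Matrix.mul_neg, neg_mulVec, Pi.neg_apply, ← mul_diagonal_single_mul_mulVec_apply]
  simp only [Function.update_eq_self, Matrix.mul_assoc]
end

section
/- Fix an asset i, constants χ_i > 0, R_f ∈ ℝ, γ > 0, a > 0, a symmetric positive-definite N×N real matrix Σ, and constants m_j (j ≠ i). For p > 0 let μ(p) ∈ ℝ^N have i-th coordinate μ_i(p) = χ_i/p − R_f and j-th coordinate m_j for j ≠ i, and let the CARA portfolio weight be w(p) = (1/(γa))·Σ⁻¹·μ(p). If w_i(p) > 0, then the shares-demanded function s(q) = a·w_i(q)/q has price elasticity of demand −p·s'(p)/s(p) = 1 + (Σ⁻¹)_{ii}·(μ_i(p) + R_f)/(γ·a·w_i(p)) = 1 + (Σ⁻¹)_{ii}·(μ_i(p) + R_f)/((Σ⁻¹ μ(p))_i); in particular the elasticity does not depend on the risk aversion γ or the assets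 under management a. -/
/-!
Since `s(q) = a·w_i(q)/q`, the elasticity of `s` is one plus that of `a·w_i`. Rescaling does not
change an elasticity, and `a·w_i = γ⁻¹·(Σ⁻¹μ)_i`, which explains why `γ` and `a` drop out. Finally
`(Σ⁻¹μ(q))_i = (Σ⁻¹)_{ii}·χ/q + C` is affine in `1/q`, and the elasticity of `q ↦ α/q + β` is
`(α/q)/(α/q + β)`.
-/

open Matrix in
theorem Matrix.mulVec_update_apply {m n R : Type*} [Fintype n] [DecidableEq n]
    [NonUnitalNonAssocSemiring R] (M : Matrix m n R) (v : n → R) (j : n) (x : R) (k : m) :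
    (M *ᵥ Function.update v j x) k = (M *ᵥ Function.update v j 0) k + M k j * x := by
  have hsplit : Function.update v j x = Function.update v j 0 + Pi.single j x := by
    ext l
    rcases eq_or_ne l j with rfl | hl <;> simp [*]
  rw [hsplit, mulVec_add, Pi.add_apply]
  simp

noncomputable def priceElasticity (s : ℝ → ℝ) (p : ℝ) : ℝ := -p * deriv s p / s p

theorem priceElasticity_const_mul (s : ℝ → ℝ) (p : ℝ) {c : ℝ} (hc : c ≠ 0) :
    priceElasticity (fun q => c * s q) p = priceElasticity s p := by
  rw [priceElasticity, priceElasticity, deriv_const_mul_field]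
  by_cases hs : s p = 0
  · simp [hs]
  · field_simp

theorem priceElasticity_div_id {s : ℝ → ℝ} {p : ℝ} (hs : DifferentiableAt ℝ s p)
    (hp : p ≠ 0) (hsp : s p ≠ 0) :
    priceElasticity (fun q => s q / q) p = 1 + priceElasticity s p := by
  rw [priceElasticity, priceElasticity, deriv_fun_div hs differentiableAt_fun_id hp, deriv_id'']
  field_simp
  ring

theorem priceElasticity_div_add_const (α β : ℝ) {p : ℝ} (hp : p ≠ 0) :
    priceElasticity (fun q => α / q + β) p = α / p / (α / p + β) := by
  have hderiv : HasDerivAt (fun q => α / q + β) (-(α / p ^ 2)) p := by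
    simpa [div_eq_mul_inv] using ((hasDerivAt_inv hp).const_mul α).add_const β
  rw [priceElasticity, hderiv.deriv]
  field_simp

theorem stmt_8_general (N : ℕ) (i : Fin N) (χ Rf γ a p : ℝ)
    (hγ : 0 < γ) (ha : 0 < a) (hp : 0 < p)
    (S : Matrix (Fin N) (Fin N) ℝ)
    (m : Fin N → ℝ)
    (μ : ℝ → Fin N → ℝ)
    (hμ : ∀ q, μ q = fun j => if j = i then χ / q - Rf else m j)
    (w : ℝ → Fin N → ℝ)
    (hw : ∀ q, w q = (1 / (γ * a)) • S⁻¹.mulVec (μ q))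
    (hwp : 0 < w p i) :
    -p * deriv (fun q => a * w q i / q) p / (a * w p i / p) =
      1 + S⁻¹ i i * (μ p i + Rf) / (γ * a * w p i) ∧
    1 + S⁻¹ i i * (μ p i + Rf) / (γ * a * w p i) =
      1 + S⁻¹ i i * (μ p i + Rf) / (S⁻¹.mulVec (μ p) i) := by
  obtain ⟨C, hC⟩ : ∃ C, ∀ q, S⁻¹.mulVec (μ q) i = S⁻¹ i i * χ / q + C := by
    refine ⟨S⁻¹.mulVec (Function.update m i 0) i - S⁻¹ i i * Rf, fun q => ?_⟩
    have hμq : μ q = Function.update m i (χ / q - Rf) := by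
      rw [hμ]; ext j; rw [Function.update_apply]
    rw [hμq, Matrix.mulVec_update_apply]
    ring
  have hscale : ∀ q, γ * a * w q i = S⁻¹.mulVec (μ q) i := fun q => by
    rw [hw, Pi.smul_apply, smul_eq_mul]
    field_simp
  set f : ℝ → ℝ := fun q => γ⁻¹ * (S⁻¹ i i * χ / q + C)
  have hdemand : (fun q => a * w q i / q) = fun q => f q / q := by
    ext q
    simp only [f, ← hC, ← hscale]
    field_simp
  have hfp : f p ≠ 0 := by
    simp only [f, ← hC, ← hscale]
    field_simp
    positivity
  have hμp : μ p i + Rf = χ / p := by simp [hμ]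
  refine ⟨?_, by rw [hscale]⟩
  change priceElasticity (fun q => a * w q i / q) p = _
  rw [hdemand, priceElasticity_div_id (by fun_prop (disch := exact hp.ne')) hp.ne' hfp,
    priceElasticity_const_mul _ _ (inv_ne_zero hγ.ne'), priceElasticity_div_add_const _ _ hp.ne',
    hscale, hC, hμp]
  ring

/-- CARA demand `w(p) = (1/(γa))·Σ⁻¹·μ(p)` for asset `i` with exogenous
expected payoff `χᵢ > 0`, so `μ_i(p) = χᵢ/p − R_f` while the other coordinates of `μ`
are constants `m_j`. If `p > 0` and `w_i(p) > 0`, the shares demanded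
`s(q) = a·w_i(q)/q` have price elasticity
`−p·s'(p)/s(p) = 1 + (Σ⁻¹)_{ii}·(μ_i(p)+R_f)/(γ·a·w_i(p))
             = 1 + (Σ⁻¹)_{ii}·(μ_i(p)+R_f)/((Σ⁻¹μ(p))_i)`;
in particular the elasticity does not depend on `γ` or `a`. -/
theorem stmt_8 (N : ℕ) (i : Fin N) (χ Rf γ a p : ℝ)
    (hχ : 0 < χ) (hγ : 0 < γ) (ha : 0 < a) (hp : 0 < p)
    (S : Matrix (Fin N) (Fin N) ℝ) (hS : S.PosDef)
    (m : Fin N → ℝ)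
    (μ : ℝ → Fin N → ℝ)
    (hμ : ∀ q, μ q = fun j => if j = i then χ / q - Rf else m j)
    (w : ℝ → Fin N → ℝ)
    (hw : ∀ q, w q = (1 / (γ * a)) • S⁻¹.mulVec (μ q))
    (hwp : 0 < w p i) :
    -p * deriv (fun q => a * w q i / q) p / (a * w p i / p) =
      1 + S⁻¹ i i * (μ p i + Rf) / (γ * a * w p i) ∧
    1 + S⁻¹ i i * (μ p i + Rf) / (γ * a * w p i) =
      1 + S⁻¹ i i * (μ p i + Rf) / (S⁻¹.mulVec (μ p) i) :=
  stmt_8_general N i χ Rf γ a p hγ ha hp S m μ hμ w hw hwp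
end

section
/- Let Z be an N×K real matrix, Φ, Ψ ∈ ℝ^K, ζ > 0 and γ > 0. Define μ = Z·Φ ∈ ℝ^N, Γ = Z·Ψ ∈ ℝ^N, and Σ = Γ·Γᵀ + ζ·I_N. Then Σ is invertible, and the CARA portfolio weight vector satisfies (1/γ)·Σ⁻¹·μ = Z·β, where β = (1/(γ·ζ))·(Φ − κ·Ψ) ∈ ℝ^K and κ = (Γᵀ·μ)/(Γᵀ·Γ + ζ) is a scalar. Hence, under the one-factor covariance structure with means and factor loadings linear in the asset characteristics Z, optimal portfolio weights are linear in the asset's own characteristics. -/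
/-!
The covariance `Σ = Γ Γᵀ + ζ I` is a rank-one perturbation of a scalar matrix, so the
Sherman–Morrison formula inverts it explicitly:
`Σ⁻¹ = ζ⁻¹ (I - (ΓᵀΓ + ζ)⁻¹ Γ Γᵀ)`. Applied to `μ = Z Φ` this gives
`Σ⁻¹ μ = ζ⁻¹ (μ - κ Γ)` with `κ = Γᵀμ / (ΓᵀΓ + ζ)`, and since both `μ` and `Γ` lie in the
column space of `Z`, so does `Σ⁻¹ μ`.
-/

open Matrix

namespace Matrix

variable {n α : Type*} [Fintype n] [DecidableEq n] [Field α]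

theorem vecMulVec_add_smul_one_mul_eq_one (u v : n → α) {c : α} (hc : c ≠ 0)
    (hs : v ⬝ᵥ u + c ≠ 0) :
    (vecMulVec u v + c • 1) * (c⁻¹ • (1 - (v ⬝ᵥ u + c)⁻¹ • vecMulVec u v)) = 1 := by
  have hsq : (vecMulVec u v + c • 1) * vecMulVec u v = (v ⬝ᵥ u + c) • vecMulVec u v := by
    rw [Matrix.add_mul, vecMulVec_mul_vecMulVec, vecMulVec_smul, Matrix.smul_mul, Matrix.one_mul,
      add_smul]
  rw [Matrix.mul_smul, Matrix.mul_sub, Matrix.mul_smul, hsq, smul_smul, inv_mul_cancel₀ hs,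
    one_smul, Matrix.mul_one, add_sub_cancel_left, smul_smul, inv_mul_cancel₀ hc, one_smul]

theorem inv_vecMulVec_add_smul_one (u v : n → α) {c : α} (hc : c ≠ 0)
    (hs : v ⬝ᵥ u + c ≠ 0) :
    (vecMulVec u v + c • 1)⁻¹ = c⁻¹ • (1 - (v ⬝ᵥ u + c)⁻¹ • vecMulVec u v) :=
  inv_eq_right_inv (vecMulVec_add_smul_one_mul_eq_one u v hc hs)

theorem inv_vecMulVec_add_smul_one_mulVec (u v x : n → α) {c : α} (hc : c ≠ 0)
    (hs : v ⬝ᵥ u + c ≠ 0) :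
    (vecMulVec u v + c • 1)⁻¹ *ᵥ x = c⁻¹ • (x - ((v ⬝ᵥ x) / (v ⬝ᵥ u + c)) • u) := by
  rw [inv_vecMulVec_add_smul_one u v hc hs, smul_mulVec, sub_mulVec, one_mulVec, smul_mulVec,
    vecMulVec_mulVec, op_smul_eq_smul, smul_smul, inv_mul_eq_div]

end Matrix

theorem stmt_17_general (N K : ℕ) (Z : Matrix (Fin N) (Fin K) ℝ)
    (Φv Ψv : Fin K → ℝ) (ζ γ : ℝ) (hζ : 0 < ζ) :
    IsUnit (Matrix.vecMulVec (Z.mulVec Ψv) (Z.mulVec Ψv) +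
        ζ • (1 : Matrix (Fin N) (Fin N) ℝ)).det ∧
    (1 / γ) • (Matrix.vecMulVec (Z.mulVec Ψv) (Z.mulVec Ψv) +
        ζ • (1 : Matrix (Fin N) (Fin N) ℝ))⁻¹.mulVec (Z.mulVec Φv) =
      Z.mulVec (fun k =>
        (1 / (γ * ζ)) *
          (Φv k -
            ((Z.mulVec Ψv ⬝ᵥ Z.mulVec Φv) / (Z.mulVec Ψv ⬝ᵥ Z.mulVec Ψv + ζ)) * Ψv k)) := by
  set Γ := Z *ᵥ Ψv
  set κ := (Γ ⬝ᵥ Z *ᵥ Φv) / (Γ ⬝ᵥ Γ + ζ)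
  have hs : Γ ⬝ᵥ Γ + ζ ≠ 0 := by
    have : 0 ≤ Γ ⬝ᵥ Γ := by simpa using dotProduct_star_self_nonneg Γ
    positivity
  refine ⟨isUnit_det_of_right_inverse (vecMulVec_add_smul_one_mul_eq_one Γ Γ hζ.ne' hs), ?_⟩
  have hβ : (fun k => 1 / (γ * ζ) * (Φv k - κ * Ψv k)) = (γ⁻¹ * ζ⁻¹) • (Φv - κ • Ψv) := by
    ext k
    simp only [Pi.smul_apply, Pi.sub_apply, smul_eq_mul, one_div, mul_inv]
  rw [hβ, mulVec_smul, mulVec_sub, mulVec_smul, inv_vecMulVec_add_smul_one_mulVec _ _ _ hζ.ne' hs,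
    smul_smul, one_div]

/-- Under the one-factor structure `μ = Z·Φ`, `Γ = Z·Ψ`,
`Σ = Γ·Γᵀ + ζ·I_N` (`ζ > 0`), the matrix `Σ` is invertible and the CARA weights
satisfy `(1/γ)·Σ⁻¹·μ = Z·β` with `β = (1/(γζ))·(Φ − κ·Ψ)` and scalar
`κ = (Γᵀμ)/(ΓᵀΓ + ζ)`: optimal weights are linear in the characteristics `Z`. -/
theorem stmt_17 (N K : ℕ) (Z : Matrix (Fin N) (Fin K) ℝ)
    (Φv Ψv : Fin K → ℝ) (ζ γ : ℝ) (hζ : 0 < ζ) (hγ : 0 < γ) :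
    IsUnit (Matrix.vecMulVec (Z.mulVec Ψv) (Z.mulVec Ψv) +
        ζ • (1 : Matrix (Fin N) (Fin N) ℝ)).det ∧
    (1 / γ) • (Matrix.vecMulVec (Z.mulVec Ψv) (Z.mulVec Ψv) +
        ζ • (1 : Matrix (Fin N) (Fin N) ℝ))⁻¹.mulVec (Z.mulVec Φv) =
      Z.mulVec (fun k =>
        (1 / (γ * ζ)) *
          (Φv k -
            ((Z.mulVec Ψv ⬝ᵥ Z.mulVec Φv) / (Z.mulVec Ψv ⬝ᵥ Z.mulVec Ψv + ζ)) * Ψv k)) :=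
  stmt_17_general N K Z Φv Ψv ζ γ hζ
end
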